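/- arXiv:math-ph/0010036 — 4 statements merged into one kernel-verified Lean document; each statement's English description precedes it below -/
import Mathlib

section
/- Assume the generalized Legendre hypothesis on a nonempty open set O ⊂ M. Then the Hamiltonian H is smooth on O and its differential is dH = − Σ_μ (∂L/∂q^μ)(q, V(q,p)) dq^μ + Σ_{μ1<…<μn} Z^{μ1…μn}_{1…n}(q,p) dp_{μ1…μn}, where Z^{μ1…μn}_{1…n}(q,p) is the determinant of the n×n matrix with entries Z^{μ_a}_b(q,p), i.e. the components of the n-vector Z_1(q,p)∧…∧Z_n(q,p). -/
open scoped BigOperators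

noncomputable section

namespace Pataplectic

/-- A multi-index `μ : Fin d → Fin e` is increasing. -/
def IncP {d e : ℕ} (μ : Fin d → Fin e) : Prop := ∀ a b : Fin d, a < b → μ a < μ b

instance {d e : ℕ} : DecidablePred (@IncP d e) := fun μ => by unfold IncP; infer_instance

variable (n k : ℕ)

/-- Coordinates on `X × Y`, where `X = ℝⁿ` and `Y = ℝᵏ`. -/
abbrev E := Fin (n + k) → ℝ

/-- Increasing multi-indices of length `n`, indexing the coordinates `p_{μ₁…μₙ}`. -/
abbrev Idx := {μ : Fin n → Fin (n + k) // IncP μ}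

/-- The fiber of `M = ΛⁿT*(X×Y)` over a point of `X×Y`, in coordinates. -/
abbrev Psp := Idx n k → ℝ

/-- Evaluation `⟨p, z₁ ∧ … ∧ zₙ⟩ = Σ_{μ₁<…<μₙ} p_{μ₁…μₙ} det(z_b^{μ_a})`. -/
def pApply (p : Psp n k) (z : Fin n → E n k) : ℝ :=
  ∑ μ : Idx n k, p μ * Matrix.det (Matrix.of fun a b => z b (μ.1 a))

/-- The tangent vectors `z_β(v) = ∂/∂x^β + Σᵢ vⁱ_β ∂/∂yⁱ`. -/
def zvec (v : Fin k → Fin n → ℝ) : Fin n → E n k :=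
  fun β => Fin.append (fun α : Fin n => if α = β then (1:ℝ) else 0) (fun i : Fin k => v i β)

/-- The generating function `W(q,v,p) = ⟨p, z₁(v)∧…∧zₙ(v)⟩ − L(q,v)`. -/
def W (L : E n k → (Fin k → Fin n → ℝ) → ℝ) (q : E n k) (v : Fin k → Fin n → ℝ)
    (p : Psp n k) : ℝ :=
  pApply n k p (zvec n k v) - L q v

lemma contDiff_zvec (j : Fin (n + k)) (β : Fin n) :
    ContDiff ℝ (⊤ : ℕ∞) (fun v : Fin k → Fin n → ℝ => zvec n k v β j) := by
  refine Fin.addCases (motive := fun j => ContDiff ℝ (⊤ : ℕ∞) (fun v : Fin k → Fin n → ℝ => zvec n k v β j))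
    (fun α => ?_) (fun i => ?_) j
  · simp only [zvec, Fin.append_left]; exact contDiff_const
  · simp only [zvec, Fin.append_right]
    exact (ContinuousLinearMap.proj (R := ℝ) (φ := fun _ : Fin n => ℝ) β).contDiff.comp
      (ContinuousLinearMap.proj (R := ℝ) (φ := fun _ : Fin k => Fin n → ℝ) i).contDiff

lemma contDiff_detz (μ : Idx n k) :
    ContDiff ℝ (⊤ : ℕ∞) (fun v : Fin k → Fin n → ℝ =>
      Matrix.det (Matrix.of fun a b => zvec n k v b (μ.1 a))) := by
  simp only [Matrix.det_apply']
  refine ContDiff.sum fun σ _ => contDiff_const.mul ?_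
  exact contDiff_prod fun a _ => by
    simpa using contDiff_zvec n k (μ.1 (σ a)) a

/-- `pApply · (zvec v0)` as a continuous linear map. -/
def pLin (v0 : Fin k → Fin n → ℝ) : Psp n k →L[ℝ] ℝ :=
  ∑ μ : Idx n k, Matrix.det (Matrix.of fun a b => zvec n k v0 b (μ.1 a)) •
    (ContinuousLinearMap.proj (R := ℝ) (φ := fun _ : Idx n k => ℝ) μ)

lemma pLin_apply (v0 : Fin k → Fin n → ℝ) (p : Psp n k) :
    pLin n k v0 p = pApply n k p (zvec n k v0) := by
  simp [pLin, pApply, ContinuousLinearMap.sum_apply, mul_comm]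

lemma contDiff_W (L : E n k → (Fin k → Fin n → ℝ) → ℝ)
    (hL : ContDiff ℝ (⊤ : ℕ∞) (fun qv : E n k × (Fin k → Fin n → ℝ) => L qv.1 qv.2)) :
    ContDiff ℝ (⊤ : ℕ∞) (fun u : (E n k × Psp n k) × (Fin k → Fin n → ℝ) =>
      W n k L u.1.1 u.2 u.1.2) := by
  unfold W pApply
  refine ContDiff.sub ?_ (hL.comp ((contDiff_fst.comp contDiff_fst).prodMk contDiff_snd))
  refine ContDiff.sum fun μ _ => ContDiff.mul ?_ ((contDiff_detz n k μ).comp contDiff_snd)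
  exact (ContinuousLinearMap.proj (R := ℝ) (φ := fun _ : Idx n k => ℝ) μ).contDiff.comp
    (contDiff_snd.comp contDiff_fst)

lemma partialm_W (L : E n k → (Fin k → Fin n → ℝ) → ℝ)
    (hL : ContDiff ℝ (⊤ : ℕ∞) (fun qv : E n k × (Fin k → Fin n → ℝ) => L qv.1 qv.2))
    (v0 : Fin k → Fin n → ℝ) (m : E n k × Psp n k) :
    HasFDerivAt (fun m' : E n k × Psp n k => W n k L m'.1 v0 m'.2)
      ((pLin n k v0).comp (ContinuousLinearMap.snd ℝ _ _) -
        (fderiv ℝ (fun q => L q v0) m.1).comp (ContinuousLinearMap.fst ℝ _ _)) m := by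
  have h1 : (fun m' : E n k × Psp n k => pApply n k m'.2 (zvec n k v0)) =
      fun m' => ((pLin n k v0).comp (ContinuousLinearMap.snd ℝ (E n k) (Psp n k))) m' := by
    funext m'
    simp [ContinuousLinearMap.comp_apply, pLin_apply]
  have hp : HasFDerivAt (fun m' : E n k × Psp n k => pApply n k m'.2 (zvec n k v0))
      ((pLin n k v0).comp (ContinuousLinearMap.snd ℝ (E n k) (Psp n k))) m := by
    rw [h1]
    exact ContinuousLinearMap.hasFDerivAt (𝕜 := ℝ)
      ((pLin n k v0).comp (ContinuousLinearMap.snd ℝ (E n k) (Psp n k))) (x := m)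
  have hLq : ContDiff ℝ (⊤ : ℕ∞) (fun q : E n k => L q v0) :=
    hL.comp (contDiff_id.prodMk contDiff_const)
  have hLm : HasFDerivAt (fun m' : E n k × Psp n k => L m'.1 v0)
      ((fderiv ℝ (fun q => L q v0) m.1).comp (ContinuousLinearMap.fst ℝ _ _)) m :=
    ((hLq.differentiable (by simp) m.1).hasFDerivAt).comp m (hasFDerivAt_fst)
  exact hp.sub hLm

set_option maxHeartbeats 2000000
set_option linter.unusedVariables false

/-- Under the generalized Legendre hypothesis on a nonempty open set `O ⊆ M`,
the Hamiltonian `H(q,p) = W(q, V(q,p), p)` is smooth on `O` and its differential is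
`dH = −Σ_μ (∂L/∂q^μ)(q,V(q,p)) dq^μ + Σ_{μ₁<…<μₙ} Z^{μ₁…μₙ}_{1…n}(q,p) dp_{μ₁…μₙ}`,
the second sum being the evaluation of `dp` on the `n`-vector `Z₁(q,p)∧…∧Zₙ(q,p)`. -/
theorem legendre_differential_of_hamiltonian
    (n k : ℕ)
    (L : E n k → (Fin k → Fin n → ℝ) → ℝ)
    (hL : ContDiff ℝ (⊤ : ℕ∞) (fun qv : E n k × (Fin k → Fin n → ℝ) => L qv.1 qv.2))
    (O : Set (E n k × Psp n k)) (hO : IsOpen O) (hOne : O.Nonempty)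
    (V : E n k × Psp n k → (Fin k → Fin n → ℝ))
    (hV : ContDiffOn ℝ (⊤ : ℕ∞) V O)
    (hcrit : ∀ m ∈ O, fderiv ℝ (fun v => W n k L m.1 v m.2) (V m) = 0)
    (huniq : ∀ m ∈ O, ∀ v : Fin k → Fin n → ℝ,
      fderiv ℝ (fun v' => W n k L m.1 v' m.2) v = 0 → v = V m) :
    ContDiffOn ℝ (⊤ : ℕ∞) (fun m : E n k × Psp n k => W n k L m.1 (V m) m.2) O ∧
    ∀ m ∈ O, ∀ (dq : E n k) (dp : Psp n k),
      fderiv ℝ (fun m' : E n k × Psp n k => W n k L m'.1 (V m') m'.2) m (dq, dp)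
        = -(fderiv ℝ (fun q' => L q' (V m)) m.1 dq)
          + pApply n k dp (zvec n k (V m)) := by
  have hΦ := contDiff_W n k L hL
  have hΦd : Differentiable ℝ (fun u : (E n k × Psp n k) × (Fin k → Fin n → ℝ) =>
      W n k L u.1.1 u.2 u.1.2) := hΦ.differentiable (by simp)
  constructor
  · exact hΦ.comp_contDiffOn (contDiffOn_id.prodMk hV)
  intro m hm dq dp
  have hVat : DifferentiableAt ℝ V m :=
    (hV.contDiffAt (hO.mem_nhds hm)).differentiableAt (by simp)
  set DV := fderiv ℝ V m with hDVdef
  set DΦ := fderiv ℝ (fun u : (E n k × Psp n k) × (Fin k → Fin n → ℝ) =>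
      W n k L u.1.1 u.2 u.1.2) (m, V m) with hDΦdef
  -- full derivative of H
  have hg : HasFDerivAt (fun m' : E n k × Psp n k => (m', V m'))
      ((ContinuousLinearMap.id ℝ (E n k × Psp n k)).prod DV) m :=
    HasFDerivAt.prodMk (hasFDerivAt_id m) hVat.hasFDerivAt
  have hHf : HasFDerivAt (fun m' : E n k × Psp n k => W n k L m'.1 (V m') m'.2)
      (DΦ.comp ((ContinuousLinearMap.id ℝ (E n k × Psp n k)).prod DV)) m :=
    by have h := (hΦd (m, V m)).hasFDerivAt.comp m hg; exact h
  -- v-partial derivative vanishes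
  have hinr : HasFDerivAt (fun v => W n k L m.1 v m.2)
      (DΦ.comp ((0 : (Fin k → Fin n → ℝ) →L[ℝ] E n k × Psp n k).prod
        (ContinuousLinearMap.id ℝ (Fin k → Fin n → ℝ)))) (V m) :=
    (hΦd (m, V m)).hasFDerivAt.comp (V m)
      (HasFDerivAt.prodMk (hasFDerivAt_const m (V m)) (hasFDerivAt_id (V m)))
  have hv0 : DΦ.comp ((0 : (Fin k → Fin n → ℝ) →L[ℝ] E n k × Psp n k).prod
      (ContinuousLinearMap.id ℝ (Fin k → Fin n → ℝ))) = 0 := by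
    rw [← hinr.fderiv]; exact hcrit m hm
  -- m-partial derivative
  have hinl : HasFDerivAt (fun m' : E n k × Psp n k => W n k L m'.1 (V m) m'.2)
      (DΦ.comp ((ContinuousLinearMap.id ℝ (E n k × Psp n k)).prod
        (0 : (E n k × Psp n k) →L[ℝ] (Fin k → Fin n → ℝ)))) m :=
    by have h2 := HasFDerivAt.prodMk (hasFDerivAt_id (𝕜 := ℝ) m) (hasFDerivAt_const (V m) m)
       have h := (hΦd (m, V m)).hasFDerivAt.comp m h2; exact h
  have hml := partialm_W n k L hL (V m) m
  have hmeq : DΦ.comp ((ContinuousLinearMap.id ℝ (E n k × Psp n k)).prod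
        (0 : (E n k × Psp n k) →L[ℝ] (Fin k → Fin n → ℝ)))
      = (pLin n k (V m)).comp (ContinuousLinearMap.snd ℝ _ _) -
        (fderiv ℝ (fun q => L q (V m)) m.1).comp (ContinuousLinearMap.fst ℝ _ _) :=
    hinl.unique hml
  rw [hHf.fderiv]
  have hsplit : (((dq, dp), DV (dq, dp)) :
      (E n k × Psp n k) × (Fin k → Fin n → ℝ)) = ((dq, dp), 0) + (0, DV (dq, dp)) := by
    simp
  calc (DΦ.comp ((ContinuousLinearMap.id ℝ (E n k × Psp n k)).prod DV)) (dq, dp)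
      = DΦ ((dq, dp), DV (dq, dp)) := rfl
    _ = DΦ ((dq, dp), 0) + DΦ (0, DV (dq, dp)) := by rw [hsplit, map_add]
    _ = (DΦ.comp ((ContinuousLinearMap.id ℝ (E n k × Psp n k)).prod
          (0 : (E n k × Psp n k) →L[ℝ] (Fin k → Fin n → ℝ)))) (dq, dp)
        + (DΦ.comp ((0 : (Fin k → Fin n → ℝ) →L[ℝ] E n k × Psp n k).prod
          (ContinuousLinearMap.id ℝ (Fin k → Fin n → ℝ)))) (DV (dq, dp)) := rfl
    _ = -(fderiv ℝ (fun q' => L q' (V m)) m.1 dq) + pApply n k dp (zvec n k (V m)) := by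
        rw [hmeq, hv0]
        simp [ContinuousLinearMap.sub_apply, ContinuousLinearMap.comp_apply, pLin_apply]
        ring


end Pataplectic

end
end

section
/- Assume the generalized Legendre hypothesis on a nonempty open set O ⊂ M, and define the Hamiltonian tensor H^α_β(q,p) := Σ_i (∂L/∂v^i_α)(q, V(q,p)) V^i_β(q,p) − δ^α_β L(q, V(q,p)). Then for all (q,p) ∈ O, H^α_β(q,p) = δ^α_β H(q,p) − (∂⟨p,z⟩/∂z^β_α)|_{z = Z(q,p)}, where ⟨p,z⟩ = ⟨p, z_1∧…∧z_n⟩ is viewed as a function of the matrix of components z^μ_α of the vectors z_α. -/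
open scoped BigOperators

noncomputable section

namespace Pataplectic

variable (n k : ℕ)

-- ===== auxiliary material (to be inserted above the theorem) =====

/-- the coordinate vector `∂/∂xᵝ` -/
def eX (β : Fin n) : E n k := Pi.single (Fin.castAdd k β) 1
/-- the coordinate vector `∂/∂yⁱ` -/
def eY (i : Fin k) : E n k := Pi.single (Fin.natAdd n i) 1

/-- The summand of `pApply` as an alternating map in the vectors `z`. -/
def altMap (μ : Idx n k) : (E n k) [⋀^Fin n]→ₗ[ℝ] ℝ :=
  Matrix.detRowAlternating.compLinearMap (LinearMap.funLeft ℝ ℝ μ.1)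

lemma altMap_apply (μ : Idx n k) (z : Fin n → E n k) :
    altMap n k μ z = Matrix.det (Matrix.of fun a b => z b (μ.1 a)) := by
  rw [← Matrix.det_transpose]; rfl

/-- `⟨p, z₁∧…∧zₙ⟩` as a continuous multilinear map in the `z`'s. -/
def Fc (p : Psp n k) : ContinuousMultilinearMap ℝ (fun _ : Fin n => E n k) ℝ where
  toMultilinearMap := ∑ μ : Idx n k, p μ • (altMap n k μ).toMultilinearMap
  cont := by
    have h : ⇑(∑ μ : Idx n k, p μ • (altMap n k μ).toMultilinearMap :
          MultilinearMap ℝ (fun _ : Fin n => E n k) ℝ)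
        = fun z => ∑ μ : Idx n k, p μ * Matrix.det (Matrix.of fun a b => z b (μ.1 a)) := by
      funext z
      rw [MultilinearMap.sum_apply]
      exact Finset.sum_congr rfl fun μ _ => by
        rw [MultilinearMap.smul_apply, smul_eq_mul, AlternatingMap.coe_multilinearMap, altMap_apply]
    show Continuous ⇑(∑ μ : Idx n k, p μ • (altMap n k μ).toMultilinearMap :
        MultilinearMap ℝ (fun _ : Fin n => E n k) ℝ)
    rw [h]
    refine continuous_finset_sum _ fun μ _ => (continuous_const.mul ?_)
    have hm : Continuous fun z : Fin n → E n k =>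
        (Matrix.of fun a b => z b (μ.1 a) : Matrix (Fin n) (Fin n) ℝ) :=
      continuous_matrix fun a b => (continuous_apply (μ.1 a)).comp (continuous_apply b)
    exact hm.matrix_det

lemma Fc_apply (p : Psp n k) (z : Fin n → E n k) :
    Fc n k p z = ∑ μ : Idx n k, p μ * altMap n k μ z := by
  show (∑ μ : Idx n k, p μ • (altMap n k μ).toMultilinearMap :
      MultilinearMap ℝ (fun _ : Fin n => E n k) ℝ) z = _
  rw [MultilinearMap.sum_apply]
  exact Finset.sum_congr rfl fun μ _ => by rw [MultilinearMap.smul_apply, smul_eq_mul]; rfl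

lemma pApply_eq_Fc (p : Psp n k) (z : Fin n → E n k) : pApply n k p z = Fc n k p z := by
  rw [Fc_apply, pApply]
  exact Finset.sum_congr rfl fun μ _ => by rw [altMap_apply]

lemma zvec_apply (v : Fin k → Fin n → ℝ) (β : Fin n) :
    zvec n k v β = eX n k β + ∑ i : Fin k, v i β • eY n k i := by
  funext μ
  refine Fin.addCases (fun α => ?_) (fun i => ?_) μ
  · have h1 : (∑ i : Fin k, v i β • eY n k i) (Fin.castAdd k α) = 0 := by
      rw [Finset.sum_apply]
      refine Finset.sum_eq_zero fun i _ => ?_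
      have h : (Fin.castAdd k α : Fin (n+k)) ≠ Fin.natAdd n i := by
        intro hc
        have hv := congrArg Fin.val hc
        have hα := α.isLt
        simp at hv
        omega
      simp [eY, Pi.single_apply, h]
    have h2 : eX n k β (Fin.castAdd k α) = if α = β then 1 else 0 := by
      rw [eX, Pi.single_apply]
      simp [Fin.ext_iff]
    simp only [Pi.add_apply, h1, h2, add_zero, zvec, Fin.append_left]
  · have h1 : eX n k β (Fin.natAdd n i) = 0 := by
      have h : (Fin.natAdd n i : Fin (n+k)) ≠ Fin.castAdd k β := by
        intro hc
        have hv := congrArg Fin.val hc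
        have hβ := β.isLt
        simp at hv
        omega
      simp [eX, Pi.single_apply, h]
    have h2 : (∑ j : Fin k, v j β • eY n k j) (Fin.natAdd n i) = v i β := by
      rw [Finset.sum_apply, Finset.sum_eq_single i]
      · simp [eY]
      · intro j _ hj
        have h : (Fin.natAdd n i : Fin (n+k)) ≠ Fin.natAdd n j := by
          intro hc
          have hv := congrArg Fin.val hc
          simp at hv
          exact hj (Fin.ext hv).symm
        simp [eY, Pi.single_apply, h]
      · simp
    simp only [Pi.add_apply, h1, h2, zero_add, zvec, Fin.append_right]

/-- The linear part of `v ↦ zvec v`. -/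
def Alin : (Fin k → Fin n → ℝ) →ₗ[ℝ] (Fin n → E n k) where
  toFun v := fun β => ∑ i : Fin k, v i β • eY n k i
  map_add' v w := by funext β; simp [add_smul, Finset.sum_add_distrib]
  map_smul' c v := by funext β; simp [Finset.smul_sum, smul_smul]

def Ac : (Fin k → Fin n → ℝ) →L[ℝ] (Fin n → E n k) :=
  LinearMap.toContinuousLinearMap (Alin n k)

lemma zvec_eq (v : Fin k → Fin n → ℝ) :
    zvec n k v = (fun β => eX n k β) + Alin n k v :=
  funext fun β => zvec_apply n k v β

lemma hasFDerivAt_zvec (v : Fin k → Fin n → ℝ) :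
    HasFDerivAt (zvec n k) (Ac n k) v := by
  have h : HasFDerivAt (fun v => (fun β => eX n k β) + Ac n k v)
      (Ac n k) v := ((Ac n k).hasFDerivAt).const_add _
  exact h.congr_of_eventuallyEq (Filter.Eventually.of_forall fun w => (zvec_eq n k w))

lemma Alin_single (i : Fin k) (γ : Fin n) :
    Alin n k (Pi.single i (Pi.single γ 1)) = Pi.single γ (eY n k i) := by
  funext β
  show (∑ j : Fin k, (Pi.single i (Pi.single γ (1:ℝ)) : Fin k → Fin n → ℝ) j β • eY n k j) = _
  rw [Finset.sum_eq_single i]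
  · by_cases h : β = γ <;> simp [Pi.single_apply, h]
  · intro j _ hj; simp [Pi.single_apply, hj]
  · simp

lemma Fc_linearDeriv_single (p : Psp n k) (x : Fin n → E n k) (γ : Fin n) (w : E n k) :
    (Fc n k p).linearDeriv x (Pi.single γ w) = Fc n k p (Function.update x γ w) := by
  rw [ContinuousMultilinearMap.linearDeriv_apply]
  rw [Finset.sum_eq_single γ]
  · rw [Pi.single_eq_same]
  · intro b _ hb
    rw [Pi.single_eq_of_ne hb]
    exact (Fc n k p).map_update_zero x b
  · simp

lemma Fc_update_eq_zero (p : Psp n k) (z : Fin n → E n k) {α β : Fin n} (hab : α ≠ β) :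
    Fc n k p (Function.update z α (z β)) = 0 := by
  rw [Fc_apply]
  refine Finset.sum_eq_zero fun μ _ => ?_
  have h : (altMap n k μ) (Function.update z α (z β)) = 0 := by
    refine (altMap n k μ).map_eq_zero_of_eq _ ?_ hab
    rw [Function.update_self, Function.update_of_ne (Ne.symm hab)]
  rw [h, mul_zero]

/-- Under the generalized Legendre hypothesis, the Hamiltonian tensor
`H^α_β(q,p) = Σᵢ (∂L/∂vⁱ_α)(q,V(q,p)) Vⁱ_β(q,p) − δ^α_β L(q,V(q,p))`
satisfies `H^α_β = δ^α_β H(q,p) − (∂⟨p,z⟩/∂z^β_α)|_{z = Z(q,p)}`, where `⟨p,z⟩`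
is viewed as a function of the matrix of components `z^μ_α` of the vectors `z_α`. -/
theorem hamiltonian_tensor_formula
    (n k : ℕ)
    (L : E n k → (Fin k → Fin n → ℝ) → ℝ)
    (hL : ContDiff ℝ (⊤ : ℕ∞) (fun qv : E n k × (Fin k → Fin n → ℝ) => L qv.1 qv.2))
    (O : Set (E n k × Psp n k)) (hO : IsOpen O) (hOne : O.Nonempty)
    (V : E n k × Psp n k → (Fin k → Fin n → ℝ))
    (hV : ContDiffOn ℝ (⊤ : ℕ∞) V O)
    (hcrit : ∀ m ∈ O, fderiv ℝ (fun v => W n k L m.1 v m.2) (V m) = 0)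
    (huniq : ∀ m ∈ O, ∀ v : Fin k → Fin n → ℝ,
      fderiv ℝ (fun v' => W n k L m.1 v' m.2) v = 0 → v = V m) :
    ∀ m ∈ O, ∀ (α β : Fin n),
      (∑ i : Fin k,
          fderiv ℝ (fun v => L m.1 v) (V m) (Pi.single i (Pi.single α 1)) * V m i β)
        - (if α = β then L m.1 (V m) else 0)
      = (if α = β then W n k L m.1 (V m) m.2 else 0)
        - fderiv ℝ (fun z : Fin n → E n k => pApply n k m.2 z) (zvec n k (V m))
            (Pi.single α (Pi.single (Fin.castAdd k β) 1)) := by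
  intro m hm α β
  classical
  set p := m.2 with hp
  set v0 := V m with hv0
  set Z := zvec n k v0 with hZ
  set F := Fc n k p with hFdef
  -- derivative of L(q, ·)
  have hLd : DifferentiableAt ℝ (fun v => L m.1 v) v0 := by
    have h1 : DifferentiableAt ℝ (fun qv : E n k × (Fin k → Fin n → ℝ) => L qv.1 qv.2)
        (m.1, v0) := (hL.differentiable (by simp)).differentiableAt
    exact h1.comp v0 (DifferentiableAt.prodMk (differentiableAt_const m.1) differentiableAt_id)
  set D := fderiv ℝ (fun v => L m.1 v) v0 with hD
  have hLder : HasFDerivAt (fun v => L m.1 v) D v0 := hLd.hasFDerivAt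
  -- derivative of pApply ∘ zvec
  have hP : HasFDerivAt (fun v => pApply n k p (zvec n k v))
      ((F.linearDeriv Z).comp (Ac n k)) v0 := by
    have h2 := (F.hasFDerivAt (x := Z)).comp v0 (hasFDerivAt_zvec n k v0)
    have h3 : (fun v => pApply n k p (zvec n k v)) = ⇑F ∘ zvec n k := by
      funext w; exact pApply_eq_Fc n k p (zvec n k w)
    rw [h3]; exact h2
  have hWd : HasFDerivAt (fun v => W n k L m.1 v m.2)
      ((F.linearDeriv Z).comp (Ac n k) - D) v0 := by
    exact hP.sub hLder
  have h0 : (F.linearDeriv Z).comp (Ac n k) - D = 0 := by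
    rw [← hWd.fderiv]; exact hcrit m hm
  -- criticality in coordinates
  have hkey : ∀ (i : Fin k) (γ : Fin n),
      F (Function.update Z γ (eY n k i)) = D (Pi.single i (Pi.single γ 1)) := by
    intro i γ
    have h1 : ((F.linearDeriv Z).comp (Ac n k) - D) (Pi.single i (Pi.single γ 1)) = 0 := by
      rw [h0]; simp
    rw [ContinuousLinearMap.sub_apply, sub_eq_zero, ContinuousLinearMap.comp_apply] at h1
    have hAc : Ac n k (Pi.single i (Pi.single γ 1)) = Pi.single γ (eY n k i) :=
      Alin_single n k i γ
    rw [hAc, Fc_linearDeriv_single] at h1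
    exact h1
  -- the fderiv of pApply
  have hfd : fderiv ℝ (fun z : Fin n → E n k => pApply n k m.2 z) Z = F.linearDeriv Z := by
    have hfun : (fun z : Fin n → E n k => pApply n k m.2 z) = ⇑F :=
      funext fun z => pApply_eq_Fc n k p z
    rw [hfun]
    exact (F.hasFDerivAt (x := Z)).fderiv
  have heX : (Pi.single (Fin.castAdd k β) (1:ℝ) : E n k) = eX n k β := rfl
  rw [hfd, heX, Fc_linearDeriv_single]
  -- split the update vector
  have hXeq : eX n k β = Z β - ∑ i : Fin k, v0 i β • eY n k i := by
    rw [hZ, zvec_apply, add_sub_cancel_right]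
  have hsplit : F (Function.update Z α (eX n k β))
      = F (Function.update Z α (Z β))
        - ∑ i : Fin k, v0 i β * F (Function.update Z α (eY n k i)) := by
    rw [hXeq, F.map_update_sub]
    congr 1
    have hs : F (Function.update Z α (∑ i : Fin k, v0 i β • eY n k i))
        = ∑ i : Fin k, F (Function.update Z α (v0 i β • eY n k i)) :=
      F.toMultilinearMap.map_update_sum Finset.univ α _ Z
    rw [hs]
    exact Finset.sum_congr rfl fun i _ => by rw [F.map_update_smul, smul_eq_mul]
  have hdiag : F (Function.update Z α (Z β)) = if α = β then F Z else 0 := by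
    by_cases h : α = β
    · subst h
      rw [Function.update_eq_self, if_pos rfl]
    · rw [Fc_update_eq_zero n k p Z h, if_neg h]
  have hWval : W n k L m.1 v0 m.2 = F Z - L m.1 v0 := by
    rw [W, pApply_eq_Fc]
  rw [hsplit, hdiag, hWval]
  have hsum : ∀ i : Fin k, v0 i β * F (Function.update Z α (eY n k i))
      = D (Pi.single i (Pi.single α 1)) * v0 i β := fun i => by
    rw [hkey i α, mul_comm]
  rw [Finset.sum_congr rfl fun i _ => hsum i]
  by_cases h : α = β <;> simp [h] <;> ring


end Pataplectic

end
end

section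
/- Let H be a smooth function on M and let (q,p) ∈ M. Let X = X_1∧…∧X_n ∈ Λ^n T_{(q,p)}M be a decomposable n-vector with dx^β(X_α) = δ^β_α for all α,β. Then the following are equivalent: (i) X is H-Hamiltonian, i.e. (−1)^n X⌟Ω = dH modulo the algebraic ideal spanned by dx^1,…,dx^n; (ii) (−1)^n X⌟Ω = dH − Σ_α dH(X_α) dx^α; (iii) X⌟(Ω − d(Hω)) = 0. Here X⌟Ω is the 1-form V ↦ Ω(X_1,…,X_n,V). -/
open scoped BigOperators
open MeasureTheory

noncomputable section

namespace Pataplectic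

variable (n k : ℕ)

/-- The pataplectic manifold `M = ΛⁿT*(X×Y)`. -/
abbrev Mfd := E n k × Psp n k

/-- A (raw) differential `d`-form on `M`, given by its evaluation on `d`-tuples
of tangent vectors. -/
abbrev Form (d : ℕ) := Mfd n k → (Fin d → Mfd n k) → ℝ

variable {n k}

/-- The exterior derivative of a `d`-form on `M`, via the standard formula
on constant vector fields. -/
def extD {d : ℕ} (ω : Form n k d) : Form n k (d + 1) :=
  fun x v => ∑ i : Fin (d + 1),
    (-1 : ℝ) ^ (i : ℕ) * fderiv ℝ (fun y => ω y (i.removeNth v)) x (v i)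

/-- Interior product of a vector field with a `(d+1)`-form. -/
def iota {d : ℕ} (ξ : Mfd n k → Mfd n k) (ω : Form n k (d + 1)) : Form n k d :=
  fun x v => ω x (Fin.cons (ξ x) v)

/-- A raw form is smooth if its evaluation on any fixed tuple of (constant)
tangent vectors is a smooth function on `M`. -/
def SmoothF {d : ℕ} (ω : Form n k d) : Prop := ∀ v, ContDiff ℝ (⊤ : ℕ∞) (fun x => ω x v)

variable (n k)

/-- The Poincaré–Cartan form `θ = Σ_{μ₁<…<μₙ} p_{μ₁…μₙ} dq^{μ₁}∧…∧dq^{μₙ}`. -/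
def theta : Form n k n := fun m v => pApply n k m.2 (fun i => (v i).1)

/-- The pataplectic form `Ω = dθ`. -/
def Omega : Form n k (n + 1) := extD (theta n k)

/-- The volume form `ω = dx¹∧…∧dxⁿ`, pulled back to `M`. -/
def vol : Form n k n := fun _ v => Matrix.det (Matrix.of fun a b => (v b).1 (Fin.castAdd k a))

/-- Lie bracket of two vector fields on `M`. -/
def lieB (ξ η : Mfd n k → Mfd n k) : Mfd n k → Mfd n k :=
  fun x => fderiv ℝ η x (ξ x) - fderiv ℝ ξ x (η x)


section AuxLemmas

theorem altSum_apply {ι M : Type*} [AddCommGroup M] [Module ℝ M] {d : ℕ}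
    (s : Finset ι) (f : ι → AlternatingMap ℝ M ℝ (Fin d)) (v : Fin d → M) :
    (∑ i ∈ s, f i) v = ∑ i ∈ s, f i v := by
  induction s using Finset.cons_induction with
  | empty => rfl
  | cons a s ha ih => rw [Finset.sum_cons, Finset.sum_cons, AlternatingMap.add_apply, ih]

variable {n k : ℕ}

/-- `pApply` as an alternating map in the tangent vectors. -/
def pAlt (p : Psp n k) : AlternatingMap ℝ (E n k) ℝ (Fin n) :=
  ∑ μ : Idx n k, p μ • (Matrix.detRowAlternating.compLinearMap (LinearMap.funLeft ℝ ℝ μ.1))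

theorem pApply_eq_pAlt (p : Psp n k) (z : Fin n → E n k) : pApply n k p z = pAlt p z := by
  rw [pAlt, altSum_apply]
  refine Finset.sum_congr rfl fun μ _ => ?_
  rw [AlternatingMap.smul_apply, smul_eq_mul]
  congr 1
  rw [← Matrix.det_transpose]
  rfl

end AuxLemmas
section Aux2
variable {n k : ℕ}

/-- `y ↦ pApply y.2 z` as a linear map on `M`. -/
def thL (z : Fin n → E n k) : Mfd n k →ₗ[ℝ] ℝ where
  toFun y := pApply n k y.2 z
  map_add' a b := by
    simp only [pApply, Prod.snd_add, Pi.add_apply, add_mul, Finset.sum_add_distrib]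
  map_smul' c a := by
    simp only [pApply, Prod.smul_snd, Pi.smul_apply, smul_eq_mul, RingHom.id_apply,
      Finset.mul_sum, mul_assoc]

theorem fderiv_theta (w : Fin n → Mfd n k) (m u : Mfd n k) :
    fderiv ℝ (fun y => theta n k y w) m u = pApply n k u.2 (fun j => (w j).1) := by
  have hco : (fun y : Mfd n k => theta n k y w)
      = ⇑((thL (fun j => (w j).1)).toContinuousLinearMap) := by
    rw [LinearMap.coe_toContinuousLinearMap']
    rfl
  rw [hco, ContinuousLinearMap.fderiv]
  rfl

theorem Omega_apply (m : Mfd n k) (v : Fin (n+1) → Mfd n k) :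
    Omega n k m v
      = ∑ i : Fin (n+1), (-1:ℝ)^(i:ℕ) * pApply n k (v i).2 (fun j => (v (i.succAbove j)).1) := by
  unfold Omega extD
  refine Finset.sum_congr rfl fun i _ => ?_
  rw [fderiv_theta]
  rfl

end Aux2
section Aux3

/-- The cycle `(α α+1 … N−1)`, conjugated version of `cycleRange`. -/
def cyc {N : ℕ} (α : Fin N) : Equiv.Perm (Fin N) :=
  Fin.revPerm * (Fin.cycleRange α.rev) * Fin.revPerm

theorem sign_cyc {N : ℕ} (α : Fin N) :
    Equiv.Perm.sign (cyc α) = (-1) ^ (N - 1 - (α:ℕ)) := by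
  have hrev : ((α.rev : ℕ)) = N - 1 - (α:ℕ) := by
    rw [Fin.val_rev]; omega
  rw [cyc, map_mul, map_mul, Fin.sign_cycleRange, hrev]
  rcases Int.units_eq_one_or (Equiv.Perm.sign (Fin.revPerm : Equiv.Perm (Fin N))) with h | h <;>
    rw [h] <;> simp

theorem removeNth_snoc_comp_cyc {γ : Type*} {N : ℕ} (Z : Fin N → γ) (V : γ) (α : Fin N) :
    Function.update Z α V = (Fin.removeNth (α := fun _ => γ) α.castSucc (Fin.snoc Z V)) ∘ (cyc α) := by
  cases N with
  | zero => exact α.elim0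
  | succ m =>
  funext x
  simp only [Function.comp_apply, Fin.removeNth, cyc, Equiv.Perm.mul_apply, Fin.revPerm_apply]
  rcases lt_trichotomy x α with hx | hx | hx
  · rw [Fin.cycleRange_of_gt (by rwa [Fin.rev_lt_rev]), Fin.rev_rev,
      Fin.succAbove_of_castSucc_lt _ _ (by rwa [Fin.castSucc_lt_castSucc_iff]),
      Fin.snoc_castSucc, Function.update_of_ne (ne_of_lt hx)]
  · subst hx
    rw [Fin.cycleRange_self]
    have h0 : ((Fin.rev (0 : Fin (m+1))) : ℕ) = m := by simp [Fin.val_rev]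
    rw [Fin.succAbove_of_le_castSucc _ _
        (by rw [Fin.le_def, Fin.coe_castSucc, Fin.coe_castSucc, h0]; omega)]
    rw [show (Fin.rev (0 : Fin (m+1))).succ = Fin.last (m+1) from
      Fin.ext (by rw [Fin.val_succ, h0, Fin.val_last])]
    rw [Fin.snoc_last, Function.update_self]
  · have hxlt := x.is_lt
    have hrlt : x.rev < α.rev := by rwa [Fin.rev_lt_rev]
    rw [Fin.cycleRange_of_lt hrlt]
    have hv1 : ((x.rev + 1 : Fin (m+1)) : ℕ) = (x.rev : ℕ) + 1 :=
      Fin.val_add_one_of_lt (lt_of_lt_of_le hrlt (Fin.le_last _))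
    have hs : ((Fin.rev (x.rev + 1)) : ℕ) = (x : ℕ) - 1 := by
      rw [Fin.val_rev, hv1, Fin.val_rev]; omega
    have hα : (α : ℕ) < (x : ℕ) := hx
    rw [Fin.succAbove_of_le_castSucc _ _
        (by rw [Fin.le_def, Fin.coe_castSucc, Fin.coe_castSucc, hs]; omega)]
    rw [show (Fin.rev (x.rev + 1)).succ = Fin.castSucc x from
      Fin.ext (by rw [Fin.val_succ, hs, Fin.coe_castSucc]; omega)]
    rw [Fin.snoc_castSucc, Function.update_of_ne (ne_of_gt hx)]

theorem alt_removeNth_snoc {M : Type*} [AddCommGroup M] [Module ℝ M] {N : ℕ}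
    (g : AlternatingMap ℝ M ℝ (Fin N)) (Z : Fin N → M) (V : M) (α : Fin N) :
    g (Fin.removeNth (α := fun _ => M) α.castSucc (Fin.snoc Z V))
      = (-1:ℝ)^(N - 1 - (α:ℕ)) * g (Function.update Z α V) := by
  have h := g.map_perm (Fin.removeNth (α := fun _ => M) α.castSucc (Fin.snoc Z V)) (cyc α)
  rw [← removeNth_snoc_comp_cyc, sign_cyc] at h
  rw [h, Units.smul_def]
  push_cast
  rw [zsmul_eq_mul]
  push_cast
  rw [← mul_assoc, ← mul_pow]
  norm_num

theorem neg_one_pow_fin {N : ℕ} (α : Fin N) :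
    (-1:ℝ)^(α:ℕ) * (-1:ℝ)^(N - 1 - (α:ℕ)) = -(-1:ℝ)^N := by
  have hlt := α.is_lt
  rw [← pow_add]
  have h1 : (α:ℕ) + (N - 1 - (α:ℕ)) = N - 1 := by omega
  rw [h1]
  have h2 : N = (N-1) + 1 := by omega
  conv_rhs => rw [h2]
  rw [pow_succ]
  ring

end Aux3
section Aux4
variable {n k : ℕ}

/-- The volume form as an alternating map. -/
def volAlt (n k : ℕ) : AlternatingMap ℝ (E n k) ℝ (Fin n) :=
  Matrix.detRowAlternating.compLinearMap (LinearMap.funLeft ℝ ℝ (Fin.castAdd k))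

theorem vol_eq (m : Mfd n k) (w : Fin n → Mfd n k) :
    vol n k m w = volAlt n k (fun j => (w j).1) := by
  show Matrix.det (Matrix.of fun a b => (w b).1 (Fin.castAdd k a)) = _
  rw [← Matrix.det_transpose]
  rfl

theorem volAlt_std (Zc : Fin n → E n k)
    (hZ : ∀ a b : Fin n, Zc a (Fin.castAdd k b) = if a = b then 1 else 0) :
    volAlt n k Zc = 1 := by
  show Matrix.det (Matrix.of fun b a => Zc b (Fin.castAdd k a)) = 1
  rw [show (Matrix.of fun b a => Zc b (Fin.castAdd k a)) = (1 : Matrix (Fin n) (Fin n) ℝ) from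
    Matrix.ext fun b a => by rw [Matrix.of_apply, hZ b a, Matrix.one_apply], Matrix.det_one]

theorem volAlt_update (Zc : Fin n → E n k)
    (hZ : ∀ a b : Fin n, Zc a (Fin.castAdd k b) = if a = b then 1 else 0)
    (Vc : E n k) (α : Fin n) :
    volAlt n k (Function.update Zc α Vc) = Vc (Fin.castAdd k α) := by
  show Matrix.det (Matrix.of fun b a => (Function.update Zc α Vc b) (Fin.castAdd k a)) = _
  have hM : (Matrix.of fun b a => Function.update Zc α Vc b (Fin.castAdd k a))
      = Matrix.updateRow (1 : Matrix (Fin n) (Fin n) ℝ) α (fun a => Vc (Fin.castAdd k a)) := by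
    ext b a
    rw [Matrix.of_apply, Matrix.updateRow_apply, Function.update_apply]
    split_ifs with h
    · rfl
    · rw [hZ b a, Matrix.one_apply]
  rw [hM, ← Matrix.det_transpose, ← Matrix.updateCol_transpose, Matrix.transpose_one,
    ← Matrix.cramer_apply, Matrix.cramer_one]
  rfl

theorem fst_removeNth_snoc (X : Fin n → Mfd n k) (V : Mfd n k) (i : Fin (n+1)) :
    (fun j => ((Fin.removeNth (α := fun _ => Mfd n k) i (Fin.snoc X V)) j).1)
      = Fin.removeNth (α := fun _ => E n k) i (Fin.snoc (fun j => (X j).1) V.1) := by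
  funext j
  show (Prod.fst ∘ Fin.snoc X V) (i.succAbove j) = _
  rw [Fin.comp_snoc]
  rfl

end Aux4
section Aux5
variable {n k : ℕ}

theorem Omega_snoc_self (m₀ : Mfd n k) (X : Fin n → Mfd n k) (β : Fin n) :
    Omega n k m₀ (Fin.snoc X (X β)) = 0 := by
  rw [Omega_apply, Fin.sum_univ_castSucc]
  have hterm : ∀ α : Fin n,
      (-1:ℝ)^((α.castSucc : Fin (n+1)):ℕ) * pApply n k ((Fin.snoc (α := fun _ => Mfd n k) X (X β)) α.castSucc).2
        (fun j => (Fin.snoc (α := fun _ => Mfd n k) X (X β) (α.castSucc.succAbove j)).1)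
      = if α = β then -((-1:ℝ)^n * pApply n k (X β).2 (fun j => (X j).1)) else 0 := by
    intro α
    have hz : (fun j => (Fin.snoc (α := fun _ => Mfd n k) X (X β) (α.castSucc.succAbove j)).1)
        = Fin.removeNth (α := fun _ => E n k)
            α.castSucc (Fin.snoc (fun j => (X j).1) (X β).1) :=
      fst_removeNth_snoc X (X β) α.castSucc
    rw [Fin.snoc_castSucc, hz, pApply_eq_pAlt, alt_removeNth_snoc, Fin.coe_castSucc]
    by_cases hab : α = β
    · subst hab
      rw [if_pos rfl, Function.update_eq_self, ← pApply_eq_pAlt, ← mul_assoc, neg_one_pow_fin]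
      ring
    · rw [if_neg hab]
      have h0 : (pAlt (X α).2) (Function.update (fun j => (X j).1) α ((X β).1)) = 0 := by
        refine AlternatingMap.map_eq_zero_of_eq _ _ ?_ hab
        rw [Function.update_self, Function.update_of_ne (Ne.symm hab)]
      rw [h0, mul_zero, mul_zero]
  rw [Finset.sum_congr rfl (fun α _ => hterm α)]
  have hzl : (fun j => (Fin.snoc (α := fun _ => Mfd n k) X (X β) ((Fin.last n).succAbove j)).1) = fun j => (X j).1 := by
    funext j
    rw [Fin.succAbove_last, Fin.snoc_castSucc]
  rw [hzl, Fin.snoc_last, Fin.val_last]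
  simp

end Aux5
section Aux6
variable {n k : ℕ}

theorem extD_Hvol (H : Mfd n k → ℝ) (hH : ContDiff ℝ (⊤ : ℕ∞) H) (m₀ : Mfd n k)
    (X : Fin n → Mfd n k)
    (hX : ∀ α β : Fin n, (X α).1 (Fin.castAdd k β) = if α = β then 1 else 0)
    (V : Mfd n k) :
    extD (fun y w => H y * vol n k y w) m₀ (Fin.snoc X V)
      = (-1:ℝ)^n * (fderiv ℝ H m₀ V
          - ∑ α : Fin n, fderiv ℝ H m₀ (X α) * V.1 (Fin.castAdd k α)) := by
  have hdiff : DifferentiableAt ℝ H m₀ := (hH.differentiable (by simp)).differentiableAt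
  have hterm : ∀ i : Fin (n+1),
      fderiv ℝ (fun y => H y
          * vol n k y (Fin.removeNth (α := fun _ => Mfd n k) i (Fin.snoc X V))) m₀
          ((Fin.snoc (α := fun _ => Mfd n k) X V) i)
        = vol n k m₀ (Fin.removeNth (α := fun _ => Mfd n k) i (Fin.snoc X V))
          * fderiv ℝ H m₀ (Fin.snoc (α := fun _ => Mfd n k) X V i) := by
    intro i
    rw [show (fun y => H y * vol n k y (Fin.removeNth (α := fun _ => Mfd n k) i (Fin.snoc X V)))
        = fun y => H y * vol n k m₀ (Fin.removeNth (α := fun _ => Mfd n k) i (Fin.snoc X V))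
        from rfl,
      fderiv_mul_const hdiff]
    simp [smul_eq_mul, mul_comm]
  unfold extD
  rw [Finset.sum_congr rfl (fun i _ => by rw [hterm i])]
  rw [Fin.sum_univ_castSucc]
  have hcs : ∀ α : Fin n,
      (-1:ℝ)^((α.castSucc : Fin (n+1)):ℕ)
        * (vol n k m₀ (Fin.removeNth (α := fun _ => Mfd n k) α.castSucc (Fin.snoc X V))
          * fderiv ℝ H m₀ (Fin.snoc (α := fun _ => Mfd n k) X V α.castSucc))
      = -((-1:ℝ)^n * (fderiv ℝ H m₀ (X α) * V.1 (Fin.castAdd k α))) := by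
    intro α
    rw [Fin.snoc_castSucc, vol_eq, fst_removeNth_snoc, alt_removeNth_snoc, volAlt_update _ hX,
      Fin.coe_castSucc, ← mul_assoc, ← mul_assoc, neg_one_pow_fin]
    ring
  have hlast :
      (-1:ℝ)^((Fin.last n : Fin (n+1)):ℕ)
        * (vol n k m₀ (Fin.removeNth (α := fun _ => Mfd n k) (Fin.last n) (Fin.snoc X V))
          * fderiv ℝ H m₀ (Fin.snoc (α := fun _ => Mfd n k) X V (Fin.last n)))
      = (-1:ℝ)^n * fderiv ℝ H m₀ V := by
    have hzl : (fun j => ((Fin.removeNth (α := fun _ => Mfd n k)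
        (Fin.last n) (Fin.snoc X V)) j).1) = fun j => (X j).1 := by
      funext j
      show (Fin.snoc (α := fun _ => Mfd n k) X V ((Fin.last n).succAbove j)).1 = _
      rw [Fin.succAbove_last, Fin.snoc_castSucc]
    rw [Fin.snoc_last, vol_eq, hzl, volAlt_std _ hX, Fin.val_last, one_mul]
  rw [Finset.sum_congr rfl (fun α _ => hcs α), hlast, Finset.sum_neg_distrib,
    ← Finset.mul_sum, mul_sub]
  ring

end Aux6
/-- (Lemma 1.) Let `H` be a smooth function on `M` and let `m₀ ∈ M`. For a decomposable
`n`-vector `X = X₁∧…∧Xₙ ∈ ΛⁿT_{m₀}M` with `dx^β(X_α) = δ^β_α`, the following are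
equivalent:
(i) `X` is `H`-Hamiltonian, i.e. `(−1)ⁿ X⌟Ω = dH` modulo the ideal spanned by `dx¹,…,dxⁿ`;
(ii) `(−1)ⁿ X⌟Ω = dH − Σ_α dH(X_α) dx^α`;
(iii) `X⌟(Ω − d(Hω)) = 0`. -/
theorem hamiltonian_nvector_characterizations
    (n k : ℕ)
    (H : Mfd n k → ℝ) (hH : ContDiff ℝ (⊤ : ℕ∞) H)
    (m₀ : Mfd n k)
    (X : Fin n → Mfd n k)
    (hX : ∀ α β : Fin n, (X α).1 (Fin.castAdd k β) = if α = β then 1 else 0) :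
    ((∃ c : Fin n → ℝ, ∀ V : Mfd n k,
        (-1 : ℝ) ^ n * Omega n k m₀ (Fin.snoc X V)
          = fderiv ℝ H m₀ V + ∑ α : Fin n, c α * V.1 (Fin.castAdd k α))
      ↔ (∀ V : Mfd n k,
        (-1 : ℝ) ^ n * Omega n k m₀ (Fin.snoc X V)
          = fderiv ℝ H m₀ V
            - ∑ α : Fin n, fderiv ℝ H m₀ (X α) * V.1 (Fin.castAdd k α)))
    ∧
    ((∀ V : Mfd n k,
        (-1 : ℝ) ^ n * Omega n k m₀ (Fin.snoc X V)
          = fderiv ℝ H m₀ V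
            - ∑ α : Fin n, fderiv ℝ H m₀ (X α) * V.1 (Fin.castAdd k α))
      ↔ (∀ V : Mfd n k,
        Omega n k m₀ (Fin.snoc X V)
          - extD (fun y w => H y * vol n k y w) m₀ (Fin.snoc X V) = 0))    := by
  constructor
  · constructor
    · rintro ⟨c, hc⟩ V
      have hcβ : ∀ β : Fin n, c β = -(fderiv ℝ H m₀ (X β)) := by
        intro β
        have h1 := hc (X β)
        rw [Omega_snoc_self, mul_zero] at h1
        simp only [hX, mul_ite, mul_one, mul_zero, Finset.sum_ite_eq, Finset.mem_univ,
          if_true] at h1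
        linarith
      rw [hc V]
      have hterm : ∀ α : Fin n, c α * V.1 (Fin.castAdd k α)
          = -(fderiv ℝ H m₀ (X α) * V.1 (Fin.castAdd k α)) := by
        intro α; rw [hcβ α]; ring
      rw [Finset.sum_congr rfl (fun α _ => hterm α), Finset.sum_neg_distrib]
      ring
    · intro h
      refine ⟨fun α => -(fderiv ℝ H m₀ (X α)), fun V => ?_⟩
      rw [h V]
      have hterm : ∀ α : Fin n, -(fderiv ℝ H m₀ (X α)) * V.1 (Fin.castAdd k α)
          = -(fderiv ℝ H m₀ (X α) * V.1 (Fin.castAdd k α)) := by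
        intro α; ring
      rw [Finset.sum_congr rfl (fun α _ => hterm α), Finset.sum_neg_distrib]
      ring
  · constructor
    · intro h V
      rw [extD_Hvol H hH m₀ X hX V, ← h V, ← mul_assoc, ← mul_pow]
      norm_num
    · intro h V
      have h1 := h V
      rw [extD_Hvol H hH m₀ X hX V, sub_eq_zero] at h1
      rw [h1, ← mul_assoc, ← mul_pow]
      norm_num


end Pataplectic

end
end

section
/- Let H be a smooth function on M and (q,p) ∈ M. For every decomposable n-vector X = X_1∧…∧X_n ∈ Λ^n T_{(q,p)}M with dx^β(X_α) = δ^β_α for all α,β (not necessarily H-Hamiltonian), one has the identity of 1-forms X⌟d(Hω) = (−1)^n ( dH − Σ_α dH(X_α) dx^α ). -/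
open scoped BigOperators
open MeasureTheory

noncomputable section

namespace Pataplectic

variable (n k : ℕ)

variable {n k}

variable (n k)

/-- For every smooth `H` on `M`, every point `m₀ ∈ M`, and every decomposable `n`-vector
`X = X₁∧…∧Xₙ` with `dx^β(X_α) = δ^β_α` (not necessarily `H`-Hamiltonian), one has the
identity of 1-forms `X ⌟ d(Hω) = (−1)ⁿ (dH − Σ_α dH(X_α) dx^α)`. -/
theorem contraction_with_dHomega
    (n k : ℕ)
    (H : Mfd n k → ℝ) (hH : ContDiff ℝ (⊤ : ℕ∞) H)
    (m₀ : Mfd n k)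
    (X : Fin n → Mfd n k)
    (hX : ∀ α β : Fin n, (X α).1 (Fin.castAdd k β) = if α = β then 1 else 0) :
    ∀ V : Mfd n k,
      extD (fun y w => H y * vol n k y w) m₀ (Fin.snoc X V)
        = (-1 : ℝ) ^ n *
            (fderiv ℝ H m₀ V
              - ∑ α : Fin n, fderiv ℝ H m₀ (X α) * V.1 (Fin.castAdd k α)) := by
    intro V
    classical
    set L := fderiv ℝ H m₀ with hL
    set w : Fin (n + 1) → Mfd n k := Fin.snoc X V with hw
    have hdiff : DifferentiableAt ℝ H m₀ := (hH.differentiable (by simp)).differentiableAt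
    have key : ∀ t : Fin n → Mfd n k,
        fderiv ℝ (fun y => H y * vol n k y t) m₀ = vol n k m₀ t • L :=
      fun t => fderiv_mul_const hdiff _
    set A : Matrix (Fin (n + 1)) (Fin (n + 1)) ℝ :=
      Matrix.of fun i j =>
        Fin.cases (motive := fun _ => ℝ) (L (w j)) (fun a => (w j).1 (Fin.castAdd k a)) i with hA
    have hA0 : ∀ j, A 0 j = L (w j) := by intro j; rw [hA]; simp
    have hAs : ∀ a j, A (Fin.succ a) j = (w j).1 (Fin.castAdd k a) := by
      intro a j; rw [hA]; simp
    have h1 : extD (fun y v => H y * vol n k y v) m₀ w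
        = ∑ i : Fin (n + 1), (-1 : ℝ) ^ (i : ℕ) * (vol n k m₀ (i.removeNth w) * L (w i)) := by
      simp only [extD]
      refine Finset.sum_congr rfl fun i _ => ?_
      rw [key (i.removeNth w)]
      simp [mul_assoc]
    have hsubvol : ∀ j : Fin (n + 1),
        (A.submatrix Fin.succ j.succAbove).det = vol n k m₀ (j.removeNth w) := by
      intro j
      simp only [vol]
      congr 1
    have h2 : A.det
        = ∑ i : Fin (n + 1), (-1 : ℝ) ^ (i : ℕ) * (vol n k m₀ (i.removeNth w) * L (w i)) := by
      rw [Matrix.det_succ_row_zero]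
      refine Finset.sum_congr rfl fun j _ => ?_
      rw [hA0, hsubvol]
      ring
    set cval : ℝ := L V - ∑ α : Fin n, L (X α) * V.1 (Fin.castAdd k α) with hc
    set u : Fin (n + 1) → ℝ := fun j => if j = Fin.last n then 1 else 0 with hu
    set c' : Fin (n + 1) → ℝ := Fin.cases 0 (fun α => L (X α)) with hc'
    have hrow : A 0 = (∑ m : Fin (n + 1), c' m • A m) + cval • u := by
      funext j
      simp only [Pi.add_apply, Pi.smul_apply, Finset.sum_apply, smul_eq_mul]
      rw [Fin.sum_univ_succ]
      refine Fin.lastCases ?_ (fun β => ?_) j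
      · simp only [hA0, hAs, hc', hu, hw, Fin.cases_zero, Fin.cases_succ, Fin.snoc_last,
          if_pos rfl, mul_one, zero_mul, zero_add]
        rw [hc]; ring
      · simp only [hA0, hAs, hc', hu, hw, Fin.cases_zero, Fin.cases_succ, Fin.snoc_castSucc,
          zero_mul, zero_add, if_neg (Fin.castSucc_lt_last β).ne, mul_zero, add_zero]
        simp [hX, mul_ite]
    have hBdet : (A.updateRow 0 u).det = (-1 : ℝ) ^ n := by
      rw [Matrix.det_succ_row_zero]
      rw [Finset.sum_eq_single (Fin.last n)]
      · have e1 : (A.updateRow 0 u) 0 (Fin.last n) = 1 := by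
          simp [Matrix.updateRow_self, hu]
        have e2 : ((A.updateRow 0 u).submatrix Fin.succ (Fin.last n).succAbove)
            = (1 : Matrix (Fin n) (Fin n) ℝ) := by
          ext a b
          rw [Matrix.submatrix_apply, Matrix.updateRow_ne (Fin.succ_ne_zero a),
            Fin.succAbove_last, hAs]
          simp [hw, Fin.snoc_castSucc, hX, Matrix.one_apply, eq_comm]
        rw [e1, e2, Matrix.det_one, Fin.val_last]
        ring
      · intro j _ hj
        have : (A.updateRow 0 u) 0 j = 0 := by simp [Matrix.updateRow_self, hu, hj]
        rw [this]; ring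
      · simp
    have h3 : A.det = cval * (-1 : ℝ) ^ n := by
      have h4 : A.det = (A.updateRow 0 (A 0)).det := by rw [Matrix.updateRow_eq_self]
      rw [h4, hrow, Matrix.det_updateRow_add, Matrix.det_updateRow_sum,
        Matrix.det_updateRow_smul, hBdet]
      simp [hc']
    rw [h1, ← h2, h3]
    ring

end Pataplectic

end
end
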